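/- arXiv:1711.04108 — 5 statements merged into one kernel-verified Lean document; each statement's English description precedes it below -/
import Mathlib

section
/- (Schur Lemma) Let θ ∈ ℝ^I be a weight and M a θ-stable object of 𝒜. Then M is a Schur object, i.e. the endomorphism ring End(M) is a division ring. -/
open CategoryTheory CategoryTheory.Limits

variable {𝒜 : Type*} [Category 𝒜] [Abelian 𝒜] {I : Type*} [Fintype I]

/-- The `θ`-degree of an object `M`: `deg_θ(M) = ∑ i, θ i * φ i M`. -/
noncomputable def degTheta (φ : I → 𝒜 → ℤ) (θ : I → ℝ) (M : 𝒜) : ℝ :=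
  ∑ i, θ i * (φ i M : ℝ)

/-- The rank of an object `M`: `rk(M) = ∑ i, φ i M`. -/
def rkPhi (φ : I → 𝒜 → ℤ) (M : 𝒜) : ℤ := ∑ i, φ i M

/-- The `θ`-slope of an object `M`: `μ_θ(M) = deg_θ(M) / rk(M)`. -/
noncomputable def muSlope (φ : I → 𝒜 → ℤ) (θ : I → ℝ) (M : 𝒜) : ℝ :=
  degTheta φ θ M / (rkPhi φ M : ℝ)

/-- The family `φ` is additive on short exact sequences. -/
def IsAdditiveFamily (φ : I → 𝒜 → ℤ) : Prop :=
  ∀ i, ∀ S : ShortComplex 𝒜, S.ShortExact → φ i S.X₂ = φ i S.X₁ + φ i S.X₃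

/-- The family `φ` is positive. -/
def IsPositiveFamily (φ : I → 𝒜 → ℤ) : Prop :=
  (∀ i, ∀ M : 𝒜, 0 ≤ φ i M) ∧ ∀ M : 𝒜, ¬ IsZero M → ∃ i, 0 < φ i M

/-- `M` is `θ`-semistable: it is nonzero and every nonzero proper subobject has
slope at most that of `M`. -/
noncomputable def Semistable (φ : I → 𝒜 → ℤ) (θ : I → ℝ) (M : 𝒜) : Prop :=
  ¬ IsZero M ∧ ∀ N : Subobject M, N ≠ ⊥ → N ≠ ⊤ →
    muSlope φ θ ((N : 𝒜)) ≤ muSlope φ θ M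

/-- `M` is `θ`-stable. -/
noncomputable def Stable (φ : I → 𝒜 → ℤ) (θ : I → ℝ) (M : 𝒜) : Prop :=
  ¬ IsZero M ∧ ∀ N : Subobject M, N ≠ ⊥ → N ≠ ⊤ →
    muSlope φ θ ((N : 𝒜)) < muSlope φ θ M


section Aux

variable (φ : I → 𝒜 → ℤ)

omit [Fintype I] in
lemma phi_zero_aux (hadd : IsAdditiveFamily φ) {Z : 𝒜} (hZ : IsZero Z) (i : I) :
    φ i Z = 0 := by
  have h := hadd i (ShortComplex.mk (𝟙 Z) (𝟙 Z) (by simp [hZ.eq_of_src (𝟙 Z ≫ 𝟙 Z) 0]))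
    (ShortComplex.ShortExact.mk' (ShortComplex.exact_of_isZero_X₂ _ hZ)
      inferInstance inferInstance)
  simpa using h

omit [Fintype I] in
lemma phi_iso_aux (hadd : IsAdditiveFamily φ) {A B : 𝒜} (e : A ≅ B) (i : I) :
    φ i A = φ i B := by
  have h := hadd i (ShortComplex.mk e.hom (cokernel.π e.hom) (cokernel.condition _))
    (ShortComplex.ShortExact.mk' (ShortComplex.exact_cokernel _) inferInstance inferInstance)
  have hz : IsZero (cokernel e.hom) :=
    IsZero.of_epi_eq_zero (cokernel.π e.hom) (cokernel.π_of_epi _)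
  rw [phi_zero_aux φ hadd hz] at h
  simp at h; omega

lemma mu_iso_aux (hadd : IsAdditiveFamily φ) (θ : I → ℝ) {A B : 𝒜} (e : A ≅ B) :
    muSlope φ θ A = muSlope φ θ B := by
  have h : ∀ i, φ i A = φ i B := phi_iso_aux φ hadd e
  simp only [muSlope, degTheta, rkPhi]
  have hr : ∑ i, φ i A = ∑ i, φ i B := Finset.sum_congr rfl fun i _ => h i
  rw [hr]
  congr 1
  exact Finset.sum_congr rfl fun i _ => by rw [h i]

lemma rk_pos_aux (hpos : IsPositiveFamily φ) {M : 𝒜} (hM : ¬ IsZero M) :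
    0 < rkPhi φ M := by
  obtain ⟨i, hi⟩ := hpos.2 M hM
  exact Finset.sum_pos' (fun j _ => hpos.1 j M) ⟨i, Finset.mem_univ i, hi⟩

lemma rk_add_aux (hadd : IsAdditiveFamily φ) {S : ShortComplex 𝒜} (hS : S.ShortExact) :
    rkPhi φ S.X₂ = rkPhi φ S.X₁ + rkPhi φ S.X₃ := by
  simp only [rkPhi, ← Finset.sum_add_distrib]
  exact Finset.sum_congr rfl fun i _ => hadd i S hS

lemma deg_add_aux (hadd : IsAdditiveFamily φ) (θ : I → ℝ) {S : ShortComplex 𝒜}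
    (hS : S.ShortExact) :
    degTheta φ θ S.X₂ = degTheta φ θ S.X₁ + degTheta φ θ S.X₃ := by
  simp only [degTheta, ← Finset.sum_add_distrib]
  refine Finset.sum_congr rfl fun i _ => ?_
  rw [hadd i S hS]; push_cast; ring

omit [Fintype I] in
lemma not_isZero_of_ne_bot {M : 𝒜} {N : Subobject M} (hN : N ≠ ⊥) : ¬ IsZero (N : 𝒜) := by
  intro hz
  apply hN
  have harr : N.arrow = 0 := hz.eq_of_src N.arrow 0
  rw [← Subobject.mk_arrow N, Subobject.mk_eq_bot_iff_zero]
  exact harr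

/-- Slope step: in a short exact sequence with nonzero ends, if the sub has smaller slope
then the quotient has larger slope. -/
lemma slope_step_aux (hadd : IsAdditiveFamily φ) (hpos : IsPositiveFamily φ) (θ : I → ℝ)
    {S : ShortComplex 𝒜} (hS : S.ShortExact) (h1 : ¬ IsZero S.X₁) (h3 : ¬ IsZero S.X₃)
    (hlt : muSlope φ θ S.X₁ < muSlope φ θ S.X₂) :
    muSlope φ θ S.X₂ < muSlope φ θ S.X₃ := by
  have r1 : (0:ℝ) < (rkPhi φ S.X₁ : ℝ) := by exact_mod_cast rk_pos_aux φ hpos h1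
  have r3 : (0:ℝ) < (rkPhi φ S.X₃ : ℝ) := by exact_mod_cast rk_pos_aux φ hpos h3
  have hr : (rkPhi φ S.X₂ : ℝ) = (rkPhi φ S.X₁ : ℝ) + (rkPhi φ S.X₃ : ℝ) := by
    exact_mod_cast congrArg (fun n : ℤ => (n : ℝ)) (rk_add_aux φ hadd hS)
  have hd := deg_add_aux φ hadd θ hS
  have r2 : (0:ℝ) < (rkPhi φ S.X₂ : ℝ) := by rw [hr]; linarith
  rw [muSlope, muSlope, div_lt_div_iff₀ r1 r2] at hlt
  rw [muSlope, muSlope, div_lt_div_iff₀ r2 r3]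
  rw [hr, hd] at hlt ⊢
  nlinarith

end Aux

theorem schur_lemma_stable [Nonempty I]
    (φ : I → 𝒜 → ℤ) (hadd : IsAdditiveFamily φ) (hpos : IsPositiveFamily φ)
    (θ : I → ℝ) (M : 𝒜) (hM : Stable φ θ M) :
    (0 : End M) ≠ (1 : End M) ∧ ∀ f : End M, f ≠ 0 → IsUnit f := by
  obtain ⟨hMne, hstab⟩ := hM
  constructor
  · intro h
    exact hMne ((IsZero.iff_id_eq_zero M).2 h.symm)
  · intro f hf
    have hmono : Mono (f : M ⟶ M) := by
      set K : Subobject M := Subobject.mk (kernel.ι (f : M ⟶ M)) with hKdef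
      by_cases hK : K = ⊥
      · rw [hKdef, Subobject.mk_eq_bot_iff_zero] at hK
        exact Abelian.mono_of_kernel_ι_eq_zero _ hK
      · exfalso
        by_cases hKt : K = ⊤
        · -- kernel.ι is iso, so f = 0
          have : IsIso (kernel.ι (f : M ⟶ M)) := (Subobject.isIso_iff_mk_eq_top _).2 hKt
          apply hf
          have := kernel.condition (f : M ⟶ M)
          rw [← cancel_epi (kernel.ι (f : M ⟶ M))]
          simpa using this
        · -- proper nonzero kernel: slope contradiction
          have hKlt := hstab K hK hKt
          have hKiso : ((K : 𝒜)) ≅ kernel (f : M ⟶ M) := Subobject.underlyingIso _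
          have hKmu : muSlope φ θ (kernel (f : M ⟶ M)) < muSlope φ θ M := by
            rwa [mu_iso_aux φ hadd θ hKiso] at hKlt
          set S : ShortComplex 𝒜 := ShortComplex.mk (kernel.ι (f : M ⟶ M))
            (cokernel.π (kernel.ι (f : M ⟶ M))) (cokernel.condition _) with hSdef
          have hSe : S.ShortExact := ShortComplex.ShortExact.mk'
            (ShortComplex.exact_cokernel _) inferInstance inferInstance
          have hK1 : ¬ IsZero S.X₁ := by
            have := not_isZero_of_ne_bot hK
            intro hz
            exact this (hz.of_iso hKiso)
          -- the cokernel (= coimage) is isomorphic to the image of f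
          have hco : cokernel (kernel.ι (f : M ⟶ M)) ≅ Abelian.image (f : M ⟶ M) :=
            Abelian.coimageIsoImage (f : M ⟶ M)
          have himg_ne : ¬ IsZero (Abelian.image (f : M ⟶ M)) := by
            intro hz
            apply hf
            rw [← Abelian.image.fac (f : M ⟶ M),
              hz.eq_of_tgt (Abelian.factorThruImage (f : M ⟶ M)) 0]
            simp
          have hK3 : ¬ IsZero S.X₃ := fun hz => himg_ne (hz.of_iso hco.symm)
          have hmu3 : muSlope φ θ M < muSlope φ θ S.X₃ :=
            slope_step_aux φ hadd hpos θ hSe hK1 hK3 hKmu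
          have hmuimg : muSlope φ θ M < muSlope φ θ (Abelian.image (f : M ⟶ M)) := by
            rwa [mu_iso_aux φ hadd θ hco] at hmu3
          -- but the image is a subobject of M
          set Q : Subobject M := Subobject.mk (Abelian.image.ι (f : M ⟶ M)) with hQdef
          have hQiso : ((Q : 𝒜)) ≅ Abelian.image (f : M ⟶ M) := Subobject.underlyingIso _
          by_cases hQt : Q = ⊤
          · have : IsIso (Abelian.image.ι (f : M ⟶ M)) :=
              (Subobject.isIso_iff_mk_eq_top _).2 hQt
            have := mu_iso_aux φ hadd θ (asIso (Abelian.image.ι (f : M ⟶ M)))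
            rw [← this] at hmuimg
            exact lt_irrefl _ hmuimg
          · have hQb : Q ≠ ⊥ := by
              intro hb
              rw [hQdef, Subobject.mk_eq_bot_iff_zero] at hb
              exact himg_ne (IsZero.of_mono_eq_zero (Abelian.image.ι (f : M ⟶ M)) hb)
            have := hstab Q hQb hQt
            rw [mu_iso_aux φ hadd θ hQiso] at this
            exact absurd hmuimg (not_lt.2 this.le)
    -- now f is mono; show it is iso
    have hiso : IsIso (f : M ⟶ M) := by
      set P : Subobject M := Subobject.mk (f : M ⟶ M) with hPdef
      by_cases hPt : P = ⊤
      · exact (Subobject.isIso_iff_mk_eq_top _).2 hPt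
      · exfalso
        have hPiso : ((P : 𝒜)) ≅ M := Subobject.underlyingIso _
        have hPb : P ≠ ⊥ := by
          intro hb
          rw [hPdef, Subobject.mk_eq_bot_iff_zero] at hb
          exact hf hb
        have := hstab P hPb hPt
        rw [mu_iso_aux φ hadd θ hPiso] at this
        exact lt_irrefl _ this
    exact ⟨⟨f, inv (f : M ⟶ M), by simp [End.mul_def], by simp [End.mul_def]⟩, rfl⟩
end

section
/- Let d ∈ ℕ^I be nonzero and let θ, ω ∈ ℝ^I lie in the same facet of the hyperplane arrangement ℋ(d), i.e. sgn(f(d,e)(θ)) = sgn(f(d,e)(ω)) for every e ∈ S_d. Let M be an object of 𝒜 with φ(M) = d, and let N be a nonzero subobject of M. Then sgn(μ_θ(M) − μ_θ(N)) = sgn(μ_ω(M) − μ_ω(N)). -/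
open CategoryTheory CategoryTheory.Limits

variable {𝒜 : Type*} [Category 𝒜] [Abelian 𝒜] {I : Type*} [Fintype I]

/-- The slope `μ_θ(d)` of a dimension vector `d ∈ ℕ^I`. -/
noncomputable def muSlopeVec (θ : I → ℝ) (d : I → ℕ) : ℝ :=
  (∑ i, θ i * (d i : ℝ)) / (∑ i, (d i : ℝ))

/-- `M` has dimension vector `d`, i.e. `φ i M = d i` for all `i`. -/
def HasDimVec (φ : I → 𝒜 → ℤ) (M : 𝒜) (d : I → ℕ) : Prop :=
  ∀ i, φ i M = (d i : ℤ)

/-- `e ∈ S_d`: `e ∈ ℕ^I \ ℚd` and there exist an object `M` with `φ(M) = d` and a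
subobject `N` of `M` with `φ(N) = e`. -/
def MemSd (φ : I → 𝒜 → ℤ) (d e : I → ℕ) : Prop :=
  (¬ ∃ q : ℚ, ∀ i, (e i : ℚ) = q * (d i : ℚ)) ∧
  ∃ (M : 𝒜) (N : Subobject M), HasDimVec φ M d ∧ HasDimVec φ ((N : 𝒜)) e

/-- `θ` and `ω` lie in the same facet of the hyperplane arrangement `ℋ(d)`:
`sgn (f(d,e)(θ)) = sgn (f(d,e)(ω))` for every `e ∈ S_d`. -/
def SameFacet (φ : I → 𝒜 → ℤ) (d : I → ℕ) (θ ω : I → ℝ) : Prop :=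
  ∀ e : I → ℕ, MemSd φ d e →
    Real.sign (muSlopeVec θ d - muSlopeVec θ e) =
      Real.sign (muSlopeVec ω d - muSlopeVec ω e)

lemma muSlope_eq_vec (φ : I → 𝒜 → ℤ) (θ : I → ℝ) (M : 𝒜) (d : I → ℕ)
    (h : HasDimVec φ M d) : muSlope φ θ M = muSlopeVec θ d := by
  have h1 : ∀ i, ((φ i M : ℝ)) = (d i : ℝ) := fun i => by rw [h i]; push_cast; ring
  simp only [muSlope, muSlopeVec, degTheta, rkPhi, Int.cast_sum, h1]

/-- if `θ` and `ω` lie in the same facet of `ℋ(d)`, `φ(M) = d`, and `N` is a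
nonzero subobject of `M`, then `sgn(μ_θ(M) − μ_θ(N)) = sgn(μ_ω(M) − μ_ω(N))`. -/
theorem sign_slope_diff_eq_of_sameFacet [Nonempty I]
    (φ : I → 𝒜 → ℤ) (hadd : IsAdditiveFamily φ) (hpos : IsPositiveFamily φ)
    (d : I → ℕ) (hd : d ≠ 0) (θ ω : I → ℝ) (hfacet : SameFacet φ d θ ω)
    (M : 𝒜) (hM : HasDimVec φ M d) (N : Subobject M) (hN : N ≠ ⊥) :
    Real.sign (muSlope φ θ M - muSlope φ θ ((N : 𝒜))) =
      Real.sign (muSlope φ ω M - muSlope φ ω ((N : 𝒜))) := by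
  -- N is not zero
  have hNz : ¬ IsZero ((N : 𝒜)) := by
    intro h
    apply hN
    rw [← Subobject.mk_arrow N]
    rw [Subobject.mk_eq_bot_iff_zero]
    exact h.eq_of_src _ _
  set e : I → ℕ := fun i => (φ i (N : 𝒜)).toNat with he
  have hNe : HasDimVec φ ((N : 𝒜)) e := by
    intro i
    simp [he, Int.toNat_of_nonneg (hpos.1 i _)]
  have hθN : muSlope φ θ ((N : 𝒜)) = muSlopeVec θ e := muSlope_eq_vec _ _ _ _ hNe
  have hωN : muSlope φ ω ((N : 𝒜)) = muSlopeVec ω e := muSlope_eq_vec _ _ _ _ hNe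
  rw [muSlope_eq_vec φ θ M d hM, muSlope_eq_vec φ ω M d hM, hθN, hωN]
  by_cases hq : ∃ q : ℚ, ∀ i, (e i : ℚ) = q * (d i : ℚ)
  · obtain ⟨q, hq⟩ := hq
    -- e is positive somewhere, so q ≠ 0
    obtain ⟨i₀, hi₀⟩ := hpos.2 _ hNz
    have hepos : 0 < e i₀ := by
      have := hNe i₀; omega
    have hq0 : (q : ℝ) ≠ 0 := by
      intro h0
      have : q ≠ 0 := by
        intro hq'
        rw [hq'] at hq
        have := hq i₀
        simp at this
        omega
      exact this (by exact_mod_cast h0)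
    have heq : ∀ γ : I → ℝ, muSlopeVec γ e = muSlopeVec γ d := by
      intro γ
      have hcast : ∀ i, (e i : ℝ) = (q : ℝ) * (d i : ℝ) := by
        intro i
        have := hq i
        exact_mod_cast congrArg (fun x : ℚ => (x : ℝ)) this
      unfold muSlopeVec
      simp only [hcast]
      rw [show (∑ i, γ i * ((q:ℝ) * (d i : ℝ))) = (q:ℝ) * ∑ i, γ i * (d i : ℝ) by
        rw [Finset.mul_sum]; congr 1; ext i; ring]
      rw [← Finset.mul_sum, mul_div_mul_left _ _ hq0]
    rw [heq θ, heq ω]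
    simp
  · exact hfacet e ⟨hq, M, N, hM, hNe⟩
end

section
/- Let d ∈ ℕ^I be nonzero and let θ, ω ∈ ℝ^I lie in the same facet of the hyperplane arrangement ℋ(d), i.e. sgn(f(d,e)(θ)) = sgn(f(d,e)(ω)) for every e ∈ S_d. Let M be an object of 𝒜 with φ(M) = d. Suppose M is θ-semistable and (M_i)_{i=0}^n is a Jordan–Hölder filtration of M with respect to θ. Then M is ω-semistable and (M_i)_{i=0}^n is also a Jordan–Hölder filtration of M with respect to ω. -/
open CategoryTheory CategoryTheory.Limits

variable {𝒜 : Type*} [Category 𝒜] [Abelian 𝒜] {I : Type*} [Fintype I]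

/-- The quotient object `M_{i-1}/M_i` of a decreasing chain of subobjects. -/
noncomputable def quotObj {M : 𝒜} {n : ℕ} (F : Fin (n + 1) → Subobject M)
    (hmono : ∀ i : Fin n, F i.succ ≤ F i.castSucc) (i : Fin n) : 𝒜 :=
  cokernel (Subobject.ofLE (F i.succ) (F i.castSucc) (hmono i))

/-- `(F i)` is a Jordan–Hölder filtration of `M` with respect to `θ`:
`n ≥ 1`, `F 0 = M`, `F n = 0`, each `F (i+1)` is a proper subobject of `F i`, each
successive quotient is `θ`-stable, and `μ_θ(F i) = μ_θ(M)` for `i = 0, …, n−1`. -/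
noncomputable def IsJHFiltration (φ : I → 𝒜 → ℤ) (θ : I → ℝ) {M : 𝒜} {n : ℕ}
    (F : Fin (n + 1) → Subobject M)
    (hmono : ∀ i : Fin n, F i.succ ≤ F i.castSucc) : Prop :=
  1 ≤ n ∧ F 0 = ⊤ ∧ F (Fin.last n) = ⊥ ∧
  (∀ i : Fin n, F i.succ ≠ F i.castSucc) ∧
  (∀ i : Fin n, Stable φ θ (quotObj F hmono i)) ∧
  (∀ i : Fin n, muSlope φ θ (((F i.castSucc) : 𝒜)) = muSlope φ θ M)

/-!
For a nonzero subobject `N` of an object `X` with `φ(X) = d`, the sign of `μ_θ(X) - μ_θ(N)`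
depends only on the facet of `θ`: it vanishes when `φ(N)` is proportional to `d`, and otherwise
`φ(N) ∈ S_d`. This gives the `ω`-semistability of `M` and `μ_ω(M_i) = μ_ω(M)` at once.
For the stability of a factor `Q = M_{i-1}/M_i`, a subobject `P` of `Q` is compared with
`P ⊕ B ⊆ Q ⊕ B`, where `B = M_i ⊕ M/M_{i-1}`: the object `Q ⊕ B` again has dimension vector `d`,
and `B` has the slope of `Q` for both weights, so `P` destabilises `Q` exactly when `P ⊕ B`
destabilises `Q ⊕ B`.
-/

open ZeroObject

lemma CategoryTheory.Subobject.isZero_iff_eq_bot {C : Type*} [Category C] [HasZeroMorphisms C]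
    [HasZeroObject C] {X : C} {N : Subobject X} : IsZero (N : C) ↔ N = ⊥ := by
  refine ⟨fun h => ?_, fun h => h ▸ (isZero_zero C).of_iso botCoeIsoZero⟩
  rw [← mk_arrow N, mk_eq_bot_iff_zero]
  exact h.eq_of_src _ _

lemma Real.pos_of_sign_eq_sign {x y : ℝ} (h : Real.sign x = Real.sign y) (hx : 0 < x) :
    0 < y := by
  rw [Real.sign_of_pos hx] at h
  rcases lt_trichotomy y 0 with hy | hy | hy
  · rw [Real.sign_of_neg hy] at h; norm_num at h
  · rw [hy, Real.sign_zero] at h; norm_num at h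
  · exact hy

section Slope

omit [Category 𝒜] [Abelian 𝒜]

variable {φ : I → 𝒜 → ℤ} {X Y Z : 𝒜}

lemma degTheta_add (θ : I → ℝ) (h : ∀ i, φ i X = φ i Y + φ i Z) :
    degTheta φ θ X = degTheta φ θ Y + degTheta φ θ Z := by
  simp only [degTheta, h, ← Finset.sum_add_distrib, Int.cast_add, mul_add]

lemma rkPhi_add (h : ∀ i, φ i X = φ i Y + φ i Z) : rkPhi φ X = rkPhi φ Y + rkPhi φ Z := by
  simp only [rkPhi, h, Finset.sum_add_distrib]

lemma muSlope_congr (θ : I → ℝ) (h : ∀ i, φ i X = φ i Y) : muSlope φ θ X = muSlope φ θ Y := by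
  simp only [muSlope, degTheta, rkPhi, h]

lemma degTheta_sub_const (θ : I → ℝ) (c : ℝ) (X : 𝒜) :
    degTheta φ (fun i => θ i - c) X = degTheta φ θ X - c * rkPhi φ X := by
  simp only [degTheta, rkPhi, sub_mul, Finset.sum_sub_distrib, Finset.mul_sum, Int.cast_sum]

lemma degTheta_sub_eq_zero_iff {θ : I → ℝ} {c : ℝ} (hX : 0 < rkPhi φ X) :
    degTheta φ (fun i => θ i - c) X = 0 ↔ muSlope φ θ X = c := by
  rw [degTheta_sub_const, sub_eq_zero, muSlope, div_eq_iff (by exact_mod_cast hX.ne')]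

lemma degTheta_sub_neg_iff {θ : I → ℝ} {c : ℝ} (hX : 0 < rkPhi φ X) :
    degTheta φ (fun i => θ i - c) X < 0 ↔ muSlope φ θ X < c := by
  rw [degTheta_sub_const, sub_neg, muSlope, div_lt_iff₀ (by exact_mod_cast hX)]

lemma HasDimVec.rkPhi_eq {e : I → ℕ} (h : HasDimVec φ X e) :
    (rkPhi φ X : ℝ) = ∑ i, (e i : ℝ) := by
  unfold HasDimVec at h
  simp only [rkPhi, Int.cast_sum, h, Int.cast_natCast]

lemma HasDimVec.muSlope_eq {e : I → ℕ} (h : HasDimVec φ X e) (θ : I → ℝ) :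
    muSlope φ θ X = muSlopeVec θ e := by
  rw [muSlope, h.rkPhi_eq]
  unfold HasDimVec at h
  simp only [muSlopeVec, degTheta, h, Int.cast_natCast]

end Slope

lemma muSlopeVec_eq_of_proportional (θ : I → ℝ) {d e : I → ℕ} (q : ℚ)
    (hq : ∀ i, (e i : ℚ) = q * d i) (he : 0 < ∑ i, (e i : ℝ)) :
    muSlopeVec θ e = muSlopeVec θ d := by
  have hq' : ∀ i, (e i : ℝ) = q * d i := fun i => by
    exact_mod_cast congrArg (Rat.cast : ℚ → ℝ) (hq i)
  have hq0 : (q : ℝ) ≠ 0 := by rintro h; simp [hq', h] at he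
  simp only [muSlopeVec, hq', mul_left_comm _ (q : ℝ), ← Finset.mul_sum, mul_div_mul_left _ _ hq0]

section Additive

omit [Fintype I]

namespace IsAdditiveFamily

variable {φ : I → 𝒜 → ℤ}

lemma eq_zero_of_isZero (hadd : IsAdditiveFamily φ) (i : I) {X : 𝒜} (hX : IsZero X) :
    φ i X = 0 := by
  have h := hadd i (ShortComplex.mk (𝟙 X) (𝟙 X) (hX.eq_of_src _ _))
    { exact := ShortComplex.exact_of_isZero_X₂ _ hX }
  dsimp at h
  omega

lemma eq_of_iso (hadd : IsAdditiveFamily φ) (i : I) {X Y : 𝒜} (e : X ≅ Y) : φ i X = φ i Y := by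
  have h := hadd i (ShortComplex.mk e.hom (0 : Y ⟶ 0) comp_zero)
    { exact := (ShortComplex.exact_iff_epi _ rfl).2 inferInstance
      epi_g := ⟨fun g h _ => (isZero_zero 𝒜).eq_of_src g h⟩ }
  have h0 := hadd.eq_zero_of_isZero i (isZero_zero 𝒜)
  dsimp at h
  omega

lemma biprod (hadd : IsAdditiveFamily φ) (i : I) (X Y : 𝒜) : φ i (X ⊞ Y) = φ i X + φ i Y :=
  hadd i _ (ShortComplex.Splitting.ofHasBinaryBiproduct X Y).shortExact

lemma eq_add_cokernel (hadd : IsAdditiveFamily φ) (i : I) {X Y : 𝒜} (f : X ⟶ Y) [Mono f] :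
    φ i Y = φ i X + φ i (cokernel f) :=
  hadd i (ShortComplex.mk f (cokernel.π f) (cokernel.condition f))
    { exact := ShortComplex.exact_of_g_is_cokernel _ (cokernelIsCokernel f) }

variable {M : 𝒜} {n : ℕ} {F : Fin (n + 1) → Subobject M}

lemma eq_add_quotObj (hadd : IsAdditiveFamily φ) (hmono : ∀ i : Fin n, F i.succ ≤ F i.castSucc)
    (k : Fin n) (i : I) :
    φ i (F k.castSucc) = φ i (F k.succ) + φ i (quotObj F hmono k) :=
  hadd.eq_add_cokernel i _

lemma quotObj_biprod (hadd : IsAdditiveFamily φ) (hmono : ∀ i : Fin n, F i.succ ≤ F i.castSucc)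
    (k : Fin n) (i : I) :
    φ i (quotObj F hmono k ⊞ ((F k.succ : 𝒜) ⊞ cokernel (F k.castSucc).arrow)) = φ i M := by
  rw [hadd.biprod, hadd.biprod, hadd.eq_add_cokernel i (F k.castSucc).arrow,
    hadd.eq_add_quotObj hmono k]
  ring

end IsAdditiveFamily

end Additive

lemma degTheta_eq_zero_of_isZero {φ : I → 𝒜 → ℤ} (hadd : IsAdditiveFamily φ) (θ : I → ℝ)
    {X : 𝒜} (hX : IsZero X) : degTheta φ θ X = 0 := by
  simp [degTheta, hadd.eq_zero_of_isZero _ hX]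

section Positive

omit [Abelian 𝒜]

variable {φ : I → 𝒜 → ℤ}

lemma IsPositiveFamily.rkPhi_nonneg (hpos : IsPositiveFamily φ) (X : 𝒜) : 0 ≤ rkPhi φ X :=
  Finset.sum_nonneg fun i _ => hpos.1 i X

lemma IsPositiveFamily.rkPhi_pos (hpos : IsPositiveFamily φ) {X : 𝒜} (hX : ¬ IsZero X) :
    0 < rkPhi φ X := by
  obtain ⟨i, hi⟩ := hpos.2 X hX
  exact Finset.sum_pos' (fun j _ => hpos.1 j X) ⟨i, Finset.mem_univ i, hi⟩

lemma muSlope_lt_iff_of_common_summand (hpos : IsPositiveFamily φ) {θ : I → ℝ}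
    {X Q B N P : 𝒜} (hX : ∀ i, φ i X = φ i Q + φ i B) (hN : ∀ i, φ i N = φ i P + φ i B)
    (hQ : 0 < rkPhi φ Q) (hP : 0 < rkPhi φ P) (hslope : muSlope φ θ Q = muSlope φ θ X) :
    muSlope φ θ N < muSlope φ θ X ↔ muSlope φ θ P < muSlope φ θ Q := by
  have hB := hpos.rkPhi_nonneg B
  have hXrk : 0 < rkPhi φ X := by rw [rkPhi_add hX]; omega
  have hNrk : 0 < rkPhi φ N := by rw [rkPhi_add hN]; omega
  set c := muSlope φ θ Q
  have hdegQ := (degTheta_sub_eq_zero_iff (c := c) hQ).2 rfl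
  have hdegX := (degTheta_sub_eq_zero_iff hXrk).2 hslope.symm
  rw [← hslope, ← degTheta_sub_neg_iff hNrk, ← degTheta_sub_neg_iff hP, degTheta_add _ hN]
  rw [degTheta_add _ hX] at hdegX
  constructor <;> intro h <;> linarith

lemma sign_sub_muSlope_eq_of_sameFacet (hpos : IsPositiveFamily φ) {d : I → ℕ} {θ ω : I → ℝ}
    (hfacet : SameFacet φ d θ ω) {X : 𝒜} (hX : HasDimVec φ X d) (N : Subobject X)
    (hN : 0 < rkPhi φ N) :
    Real.sign (muSlope φ θ X - muSlope φ θ N) = Real.sign (muSlope φ ω X - muSlope φ ω N) := by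
  set e : I → ℕ := fun i => (φ i N).toNat
  have he : HasDimVec φ N e := fun i => (Int.toNat_of_nonneg (hpos.1 i N)).symm
  rw [hX.muSlope_eq, hX.muSlope_eq, he.muSlope_eq, he.muSlope_eq]
  by_cases hprop : ∃ q : ℚ, ∀ i, (e i : ℚ) = q * d i
  · obtain ⟨q, hq⟩ := hprop
    have hpos_e : 0 < ∑ i, (e i : ℝ) := by rw [← he.rkPhi_eq]; exact_mod_cast hN
    simp only [muSlopeVec_eq_of_proportional _ q hq hpos_e, sub_self]
  · exact hfacet e ⟨hprop, X, N, hX, he⟩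

lemma muSlope_lt_of_sameFacet (hpos : IsPositiveFamily φ) {d : I → ℕ} {θ ω : I → ℝ}
    (hfacet : SameFacet φ d θ ω) {X : 𝒜} (hX : HasDimVec φ X d) (N : Subobject X)
    (hN : 0 < rkPhi φ N) (h : muSlope φ θ N < muSlope φ θ X) :
    muSlope φ ω N < muSlope φ ω X :=
  sub_pos.1 <| Real.pos_of_sign_eq_sign
    (sign_sub_muSlope_eq_of_sameFacet hpos hfacet hX N hN) (sub_pos.2 h)

lemma muSlope_eq_of_sameFacet (hpos : IsPositiveFamily φ) {d : I → ℕ} {θ ω : I → ℝ}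
    (hfacet : SameFacet φ d θ ω) {X : 𝒜} (hX : HasDimVec φ X d) (N : Subobject X)
    (hN : 0 < rkPhi φ N) (h : muSlope φ θ N = muSlope φ θ X) :
    muSlope φ ω N = muSlope φ ω X := by
  have hsign := sign_sub_muSlope_eq_of_sameFacet hpos hfacet hX N hN
  rw [h, sub_self, Real.sign_zero, eq_comm, Real.sign_eq_zero_iff, sub_eq_zero] at hsign
  exact hsign.symm

end Positive

lemma Semistable.of_sameFacet {φ : I → 𝒜 → ℤ} (hpos : IsPositiveFamily φ) {d : I → ℕ}
    {θ ω : I → ℝ} (hfacet : SameFacet φ d θ ω) {X : 𝒜} (hX : HasDimVec φ X d) (hss : Semistable φ θ X) :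
    Semistable φ ω X := by
  refine ⟨hss.1, fun N hN₀ hN₁ => ?_⟩
  have hN := hpos.rkPhi_pos (mt Subobject.isZero_iff_eq_bot.1 hN₀)
  rcases (hss.2 N hN₀ hN₁).lt_or_eq with hlt | heq
  · exact (muSlope_lt_of_sameFacet hpos hfacet hX N hN hlt).le
  · exact (muSlope_eq_of_sameFacet hpos hfacet hX N hN heq).le

lemma Stable.of_sameFacet_of_biprod {φ : I → 𝒜 → ℤ} (hadd : IsAdditiveFamily φ)
    (hpos : IsPositiveFamily φ) {d : I → ℕ} {θ ω : I → ℝ} (hfacet : SameFacet φ d θ ω)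
    {Q B : 𝒜} (hd : HasDimVec φ (Q ⊞ B) d) (hθ : muSlope φ θ Q = muSlope φ θ (Q ⊞ B))
    (hω : muSlope φ ω Q = muSlope φ ω (Q ⊞ B)) (hQ : Stable φ θ Q) : Stable φ ω Q := by
  refine ⟨hQ.1, fun P hP₀ hP₁ => ?_⟩
  let N : Subobject (Q ⊞ B) := Subobject.mk (biprod.map P.arrow (𝟙 B))
  have hN : ∀ i, φ i N = φ i P + φ i B := fun i =>
    (hadd.eq_of_iso i (Subobject.underlyingIso _)).trans (hadd.biprod i _ _)
  have hQrk := hpos.rkPhi_pos hQ.1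
  have hPrk := hpos.rkPhi_pos (mt Subobject.isZero_iff_eq_bot.1 hP₀)
  have hNrk : 0 < rkPhi φ N := by rw [rkPhi_add hN]; linarith [hpos.rkPhi_nonneg B]
  have hiff := fun η (hη : muSlope φ η Q = muSlope φ η (Q ⊞ B)) =>
    muSlope_lt_iff_of_common_summand hpos (hadd.biprod · Q B) hN hQrk hPrk hη
  exact (hiff ω hω).1 <| muSlope_lt_of_sameFacet hpos hfacet hd N hNrk <|
    (hiff θ hθ).2 (hQ.2 P hP₀ hP₁)

lemma muSlope_quotObj_eq {φ : I → 𝒜 → ℤ} (hadd : IsAdditiveFamily φ) {θ : I → ℝ} {c : ℝ}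
    {M : 𝒜} {n : ℕ} {F : Fin (n + 1) → Subobject M}
    (hmono : ∀ i : Fin n, F i.succ ≤ F i.castSucc) (hlast : F (Fin.last n) = ⊥)
    (hrk : ∀ k : Fin n, 0 < rkPhi φ (F k.castSucc))
    (hslope : ∀ k : Fin n, muSlope φ θ (F k.castSucc) = c) (k : Fin n)
    (hQ : 0 < rkPhi φ (quotObj F hmono k)) :
    muSlope φ θ (quotObj F hmono k) = c := by
  have hF : ∀ j, degTheta φ (fun i => θ i - c) (F j) = 0 := Fin.lastCases
    (hlast ▸ degTheta_eq_zero_of_isZero hadd _ (Subobject.isZero_iff_eq_bot.2 rfl))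
    (fun k => (degTheta_sub_eq_zero_iff (hrk k)).2 (hslope k))
  have hsplit := degTheta_add (fun i => θ i - c) (hadd.eq_add_quotObj hmono k)
  rw [← degTheta_sub_eq_zero_iff hQ]
  linarith [hF k.castSucc, hF k.succ]

theorem jhFiltration_of_sameFacet_general
    (φ : I → 𝒜 → ℤ) (hadd : IsAdditiveFamily φ) (hpos : IsPositiveFamily φ)
    (d : I → ℕ) (θ ω : I → ℝ) (hfacet : SameFacet φ d θ ω)
    (M : 𝒜) (hM : HasDimVec φ M d) (hss : Semistable φ θ M)
    {n : ℕ} (F : Fin (n + 1) → Subobject M)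
    (hmono : ∀ i : Fin n, F i.succ ≤ F i.castSucc)
    (hJH : IsJHFiltration φ θ F hmono) :
    Semistable φ ω M ∧ IsJHFiltration φ ω F hmono := by
  obtain ⟨hn, htop, hbot, hproper, hstab, hslope⟩ := hJH
  have hrk : ∀ k : Fin n, 0 < rkPhi φ (F k.castSucc) := fun k => hpos.rkPhi_pos fun h => by
    have hk := Subobject.isZero_iff_eq_bot.1 h
    exact hproper k (le_bot_iff.1 (hk ▸ hmono k) |>.trans hk.symm)
  have hslopeω : ∀ k : Fin n, muSlope φ ω (F k.castSucc) = muSlope φ ω M := fun k =>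
    muSlope_eq_of_sameFacet hpos hfacet hM _ (hrk k) (hslope k)
  refine ⟨hss.of_sameFacet hpos hfacet hM, hn, htop, hbot, hproper, fun k => ?_, hslopeω⟩
  have hdim := hadd.quotObj_biprod hmono k
  have hQ := hpos.rkPhi_pos (hstab k).1
  refine (hstab k).of_sameFacet_of_biprod hadd hpos hfacet (fun i => (hdim i).trans (hM i)) ?_ ?_
  · rw [muSlope_congr θ hdim]
    exact muSlope_quotObj_eq hadd hmono hbot hrk hslope k hQ
  · rw [muSlope_congr ω hdim]
    exact muSlope_quotObj_eq hadd hmono hbot hrk hslopeω k hQ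

/-- if `θ` and `ω` lie in the same facet of `ℋ(d)`, `φ(M) = d`, `M` is
`θ`-semistable and `(M_i)` is a Jordan–Hölder filtration of `M` with respect to `θ`, then
`M` is `ω`-semistable and `(M_i)` is a Jordan–Hölder filtration with respect to `ω`. -/
theorem jhFiltration_of_sameFacet [Nonempty I]
    (φ : I → 𝒜 → ℤ) (hadd : IsAdditiveFamily φ) (hpos : IsPositiveFamily φ)
    (d : I → ℕ) (hd : d ≠ 0) (θ ω : I → ℝ) (hfacet : SameFacet φ d θ ω)
    (M : 𝒜) (hM : HasDimVec φ M d) (hss : Semistable φ θ M)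
    {n : ℕ} (F : Fin (n + 1) → Subobject M)
    (hmono : ∀ i : Fin n, F i.succ ≤ F i.castSucc)
    (hJH : IsJHFiltration φ θ F hmono) :
    Semistable φ ω M ∧ IsJHFiltration φ ω F hmono :=
  jhFiltration_of_sameFacet_general φ hadd hpos d θ ω hfacet M hM hss F hmono hJH
end

section
/- Let (V,ρ) be a nonzero complex representation of Q and h a Hermitian metric on (V,ρ). Then the following are equivalent: (1) h is irreducible; (2) whenever (V_i,ρ_i)_{i∈I} is a finite family of subrepresentations of (V,ρ) such that (V,ρ) = ⊕_{i∈I}(V_i,ρ_i) and (V_i,ρ_i), (V_j,ρ_j) are orthogonal with respect to h for all i ≠ j, there exists i ∈ I with (V_i,ρ_i) = (V,ρ). -/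
/-
Multiplication by `i` exchanges Hermitian and skew-Hermitian endomorphisms, so `h` is irreducible
iff every Hermitian endomorphism of `(V, ρ)` is scalar. The orthogonal projections onto the
summands of an orthogonal decomposition are Hermitian endomorphisms; if they are scalar, each is
`0` or `id`, and they cannot all vanish since `V ≠ 0`. Conversely, a Hermitian endomorphism `g`
is diagonalisable with orthogonal eigenspaces, which are subrepresentations; taking one summand
per eigenvalue of the components `g a` gives an orthogonal decomposition, and if it is trivial
then `g` is scalar.
-/

open Module

variable {Q₀ Q₁ : Type*} [Fintype Q₀] [Fintype Q₁] [DecidableEq Q₀]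
  (s t : Q₁ → Q₀)
  (V : Q₀ → Type*) [∀ a, NormedAddCommGroup (V a)] [∀ a, InnerProductSpace ℂ (V a)]
  [∀ a, FiniteDimensional ℂ (V a)]

/-- `W` is a subrepresentation of the representation `(V, ρ)` of the quiver
`(Q₀, Q₁, s, t)`. -/
def IsSubrep (ρ : ∀ α, V (s α) →ₗ[ℂ] V (t α)) (W : ∀ a, Submodule ℂ (V a)) : Prop :=
  ∀ α, ∀ x ∈ W (s α), ρ α x ∈ W (t α)

/-- `f` is an endomorphism of the representation `(V, ρ)`. -/
def IsRepEndo (ρ : ∀ α, V (s α) →ₗ[ℂ] V (t α)) (f : ∀ a, V a →ₗ[ℂ] V a) : Prop :=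
  ∀ α, (f (t α)) ∘ₗ (ρ α) = (ρ α) ∘ₗ (f (s α))

/-- The representation `(V, ρ)` is Schur: every endomorphism is a scalar multiple of the
identity. -/
def IsSchurRep (ρ : ∀ α, V (s α) →ₗ[ℂ] V (t α)) : Prop :=
  ∀ f : ∀ a, V a →ₗ[ℂ] V a, IsRepEndo s t V ρ f →
    ∃ c : ℂ, ∀ a, f a = c • LinearMap.id

/-- `f` is skew-Hermitian with respect to the Hermitian metric given by the inner
products on the `V a`. -/
def IsSkewHermEndo (f : ∀ a, V a →ₗ[ℂ] V a) : Prop :=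
  ∀ a, ∀ v w : V a, inner (𝕜 := ℂ) (f a v) w + inner (𝕜 := ℂ) v (f a w) = 0

/-- The Hermitian metric on `(V, ρ)` is irreducible: every skew-Hermitian endomorphism of
`(V, ρ)` is a scalar multiple of the identity. -/
def IsIrreducibleMetric (ρ : ∀ α, V (s α) →ₗ[ℂ] V (t α)) : Prop :=
  ∀ f : ∀ a, V a →ₗ[ℂ] V a, IsRepEndo s t V ρ f → IsSkewHermEndo V f →
    ∃ c : ℂ, ∀ a, f a = c • LinearMap.id

/-- Two subrepresentations are orthogonal with respect to the Hermitian metric. -/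
def OrthSubreps (W W' : ∀ a, Submodule ℂ (V a)) : Prop :=
  ∀ a, ∀ v ∈ W a, ∀ w ∈ W' a, inner (𝕜 := ℂ) v w = (0 : ℂ)

/-- The `θ`-slope of the representation `(V, ρ)`. -/
noncomputable def repSlope (θ : Q₀ → ℝ) : ℝ :=
  (∑ a, θ a * (finrank ℂ (V a) : ℝ)) / (∑ a, (finrank ℂ (V a) : ℝ))

/-- The `θ`-slope of a subrepresentation `W`. -/
noncomputable def subSlope (θ : Q₀ → ℝ) (W : ∀ a, Submodule ℂ (V a)) : ℝ :=
  (∑ a, θ a * (finrank ℂ (W a) : ℝ)) / (∑ a, (finrank ℂ (W a) : ℝ))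

/-- The representation `(V, ρ)` is `θ`-stable: it is nonzero and every nonzero proper
subrepresentation has strictly smaller `θ`-slope. -/
noncomputable def IsStableRep (ρ : ∀ α, V (s α) →ₗ[ℂ] V (t α)) (θ : Q₀ → ℝ) : Prop :=
  (0 < ∑ a, finrank ℂ (V a)) ∧
  ∀ W : ∀ a, Submodule ℂ (V a), IsSubrep s t V ρ W →
    (∃ a, W a ≠ ⊥) → (∃ a, W a ≠ ⊤) → subSlope V θ W < repSlope V θ

/-- The subrepresentation `W` of `(V, ρ)` is `θ`-stable as a representation in its own
right: it is nonzero and every nonzero proper subrepresentation of it (i.e. every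
subrepresentation of `(V, ρ)` contained in `W`) has strictly smaller `θ`-slope. -/
noncomputable def IsStableSubrep (ρ : ∀ α, V (s α) →ₗ[ℂ] V (t α)) (θ : Q₀ → ℝ)
    (W : ∀ a, Submodule ℂ (V a)) : Prop :=
  (∃ a, W a ≠ ⊥) ∧
  ∀ W' : ∀ a, Submodule ℂ (V a), IsSubrep s t V ρ W' → (∀ a, W' a ≤ W a) →
    (∃ a, W' a ≠ ⊥) → W' ≠ W → subSlope V θ W' < subSlope V θ W

/-- The summand `ρ_α ∘ ρ_α*` of `K_θ(V,ρ,h)_a`, for an arrow `α` with target `a`. -/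
noncomputable def tTerm (ρ : ∀ α, V (s α) →ₗ[ℂ] V (t α)) (a : Q₀)
    (α : {α : Q₁ // t α = a}) : Module.End ℂ (V a) :=
  α.2 ▸ ((ρ α.1) ∘ₗ (LinearMap.adjoint (ρ α.1)))

/-- The summand `ρ_α* ∘ ρ_α` of `K_θ(V,ρ,h)_a`, for an arrow `α` with source `a`. -/
noncomputable def sTerm (ρ : ∀ α, V (s α) →ₗ[ℂ] V (t α)) (a : Q₀)
    (α : {α : Q₁ // s α = a}) : Module.End ℂ (V a) :=
  α.2 ▸ ((LinearMap.adjoint (ρ α.1)) ∘ₗ (ρ α.1))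

/-- The endomorphism `K_θ(V,ρ,h)_a = θ_a id + ∑_{t(α)=a} ρ_α ρ_α* − ∑_{s(α)=a} ρ_α* ρ_α`
of `V a`. -/
noncomputable def Kop (ρ : ∀ α, V (s α) →ₗ[ℂ] V (t α)) (θ : Q₀ → ℝ) (a : Q₀) :
    Module.End ℂ (V a) :=
  ((θ a : ℂ)) • (LinearMap.id : V a →ₗ[ℂ] V a) +
    (∑ α : {α : Q₁ // t α = a}, tTerm s t V ρ a α) -
    (∑ α : {α : Q₁ // s α = a}, sTerm s t V ρ a α)

/-- The Hermitian metric `h` on `(V, ρ)` is Einstein–Hermitian with respect to `θ`: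
`K_θ(V,ρ,h)_a = c • id` for all `a`, for some constant `c ∈ ℂ`. -/
noncomputable def IsEinsteinHermitian (ρ : ∀ α, V (s α) →ₗ[ℂ] V (t α)) (θ : Q₀ → ℝ) :
    Prop :=
  ∃ c : ℂ, ∀ a, Kop s t V ρ θ a = c • (LinearMap.id : V a →ₗ[ℂ] V a)

open Module.End

section InnerProductSpace

variable {E : Type*} [NormedAddCommGroup E] [InnerProductSpace ℂ E]

theorem Submodule.eq_top_of_starProjection_eq_smul_id (K : Submodule ℂ E)
    [K.HasOrthogonalProjection] {c : ℂ} (hK : (K.starProjection : E →ₗ[ℂ] E) = c • LinearMap.id)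
    (hc : c ≠ 0) : K = ⊤ := by
  refine eq_top_iff'.2 fun v => ?_
  have hv : K.starProjection (c⁻¹ • v) = v := by
    simpa [smul_smul, hc] using LinearMap.congr_fun hK (c⁻¹ • v)
  exact hv ▸ K.starProjection_apply_mem _

theorem Submodule.eq_bot_of_starProjection_eq_smul_id (K : Submodule ℂ E)
    [K.HasOrthogonalProjection] {c : ℂ} (hK : (K.starProjection : E →ₗ[ℂ] E) = c • LinearMap.id)
    (hc : c = 0) : K = ⊥ := by
  refine (Submodule.eq_bot_iff K).2 fun v hv => ?_
  simpa [Submodule.starProjection_eq_self_iff.2 hv, hc] using LinearMap.congr_fun hK v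

theorem Module.End.eq_smul_id_of_eigenspace_eq_top {T : Module.End ℂ E} {μ : ℂ}
    (h : eigenspace T μ = ⊤) : T = μ • LinearMap.id :=
  LinearMap.ext fun _ => mem_eigenspace_iff.1 (h ▸ Submodule.mem_top)

theorem Module.End.eq_smul_id_of_I_smul_eq_smul_id {T : Module.End ℂ E} {c : ℂ}
    (h : Complex.I • T = c • LinearMap.id) : T = (-Complex.I * c) • LinearMap.id := by
  rw [mul_smul, ← h, smul_smul]
  simp

theorem LinearMap.IsSymmetric.iSup_eigenspace_eq_top_of_subset_range [FiniteDimensional ℂ E]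
    {T : E →ₗ[ℂ] E} (hT : T.IsSymmetric) {ι : Type*} {μ : ι → ℂ}
    (hμ : {c | HasEigenvalue T c} ⊆ Set.range μ) : ⨆ i, eigenspace T (μ i) = ⊤ := by
  rw [eq_top_iff,
    ← Submodule.orthogonal_eq_bot_iff.1 hT.orthogonalComplement_iSup_eigenspaces_eq_bot]
  refine iSup_le fun c => ?_
  by_cases hc : HasEigenvalue T c
  · obtain ⟨i, rfl⟩ := hμ hc
    exact le_iSup (fun i => eigenspace T (μ i)) i
  · rw [hasEigenvalue_iff, not_not] at hc
    simp [hc]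

end InnerProductSpace

section QuiverRep

variable {s t V} {ρ : ∀ α, V (s α) →ₗ[ℂ] V (t α)}

omit [Fintype Q₀] [Fintype Q₁] [DecidableEq Q₀] [∀ a, FiniteDimensional ℂ (V a)]

theorem IsSkewHermEndo.isSymmetric_I_smul {f : ∀ a, V a →ₗ[ℂ] V a} (hf : IsSkewHermEndo V f)
    (a : Q₀) : (Complex.I • f a).IsSymmetric := by
  intro v w
  have hfvw := hf a v w
  simp only [LinearMap.smul_apply, inner_smul_left, inner_smul_right, Complex.conj_I]
  linear_combination -Complex.I * hfvw

theorem isSkewHermEndo_I_smul {g : ∀ a, V a →ₗ[ℂ] V a} (hg : ∀ a, (g a).IsSymmetric) :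
    IsSkewHermEndo V (Complex.I • g) := by
  intro a v w
  simp only [Pi.smul_apply, LinearMap.smul_apply, inner_smul_left, inner_smul_right,
    Complex.conj_I, hg a v w]
  ring

theorem IsRepEndo.smul {f : ∀ a, V a →ₗ[ℂ] V a} (hf : IsRepEndo s t V ρ f) (c : ℂ) :
    IsRepEndo s t V ρ (c • f) := by
  intro α
  simp only [Pi.smul_apply, LinearMap.smul_comp, LinearMap.comp_smul, hf α]

theorem isIrreducibleMetric_iff_forall_isSymmetric :
    IsIrreducibleMetric s t V ρ ↔ ∀ g : ∀ a, V a →ₗ[ℂ] V a, IsRepEndo s t V ρ g →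
      (∀ a, (g a).IsSymmetric) → ∃ c : ℂ, ∀ a, g a = c • LinearMap.id := by
  constructor
  · intro hirr g hg hsym
    obtain ⟨c, hc⟩ := hirr _ (hg.smul Complex.I) (isSkewHermEndo_I_smul hsym)
    exact ⟨-Complex.I * c, fun a => eq_smul_id_of_I_smul_eq_smul_id (hc a)⟩
  · intro hherm f hf hskew
    obtain ⟨c, hc⟩ := hherm _ (hf.smul Complex.I) hskew.isSymmetric_I_smul
    exact ⟨-Complex.I * c, fun a => eq_smul_id_of_I_smul_eq_smul_id (hc a)⟩

theorem IsRepEndo.isSubrep_eigenspace {g : ∀ a, V a →ₗ[ℂ] V a} (hg : IsRepEndo s t V ρ g)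
    (μ : ℂ) : IsSubrep s t V ρ (fun a => eigenspace (g a) μ) := by
  intro α x hx
  rw [mem_eigenspace_iff] at hx ⊢
  rw [← LinearMap.comp_apply, hg α, LinearMap.comp_apply, hx, map_smul]

theorem orthSubreps_eigenspace {g : ∀ a, V a →ₗ[ℂ] V a} (hg : ∀ a, (g a).IsSymmetric)
    {μ ν : ℂ} (hμν : μ ≠ ν) :
    OrthSubreps V (fun a => eigenspace (g a) μ) (fun a => eigenspace (g a) ν) :=
  fun a v hv w hw => (hg a).orthogonalFamily_eigenspaces hμν ⟨v, hv⟩ ⟨w, hw⟩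

/-- Since the summands span, it suffices to check commutation on each `W j`: `ρ` maps `W i` into
`W i`, and `W j` for `j ≠ i` into `(W i)ᗮ`. -/
theorem isRepEndo_starProjection [∀ a, FiniteDimensional ℂ (V a)] {ι : Type*}
    {W : ι → ∀ a, Submodule ℂ (V a)}
    (hsub : ∀ i, IsSubrep s t V ρ (W i)) (htop : ∀ a, ⨆ i, W i a = ⊤)
    (horth : ∀ i j, i ≠ j → OrthSubreps V (W i) (W j)) (i : ι) :
    IsRepEndo s t V ρ (fun a => (W i a).starProjection) := by
  intro α
  ext x
  refine Submodule.iSup_induction (fun j => W j (s α)) (motive := fun x =>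
    (W i (t α)).starProjection (ρ α x) = ρ α ((W i (s α)).starProjection x))
    (htop (s α) ▸ Submodule.mem_top) (fun j y hy => ?_) (by simp) (fun y z hy hz => ?_)
  · by_cases hji : j = i
    · subst hji
      rw [Submodule.starProjection_eq_self_iff.2 hy,
        Submodule.starProjection_eq_self_iff.2 (hsub j α y hy)]
    · have hperp : ∀ a, ∀ z ∈ W j a, (W i a).starProjection z = 0 := fun a z hz =>
        (Submodule.starProjection_apply_eq_zero_iff _).2
          ((Submodule.mem_orthogonal _ _).2 fun u hu => horth i j (Ne.symm hji) a u hu z hz)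
      rw [hperp _ _ hy, hperp _ _ (hsub j α y hy), map_zero]
  · simp only [map_add, hy, hz]

end QuiverRep

theorem irreducibleMetric_iff_no_orthogonal_decomposition_general
    {Q₀ Q₁ : Type*} [Fintype Q₀]
    (s t : Q₁ → Q₀)
    (V : Q₀ → Type*) [∀ a, NormedAddCommGroup (V a)] [∀ a, InnerProductSpace ℂ (V a)]
    [∀ a, FiniteDimensional ℂ (V a)]
    (ρ : ∀ α, V (s α) →ₗ[ℂ] V (t α))
    (hnz : 0 < ∑ a, Module.finrank ℂ (V a)) :
    IsIrreducibleMetric s t V ρ ↔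
      ∀ (n : ℕ) (W : Fin n → ∀ a, Submodule ℂ (V a)),
        (∀ i, IsSubrep s t V ρ (W i)) →
        (∀ a, (⨆ i, W i a) = ⊤) →
        (∀ i j, i ≠ j → OrthSubreps V (W i) (W j)) →
        ∃ i, ∀ a, W i a = ⊤ := by
  obtain ⟨a₀, -, ha₀⟩ := Finset.exists_ne_zero_of_sum_ne_zero hnz.ne'
  have : Nontrivial (V a₀) := Module.nontrivial_of_finrank_pos (Nat.pos_of_ne_zero ha₀)
  rw [isIrreducibleMetric_iff_forall_isSymmetric]
  constructor
  · intro hherm n W hsub htop horth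
    choose c hc using fun i => hherm _ (isRepEndo_starProjection hsub htop horth i)
      fun a => (W i a).starProjection_isSymmetric
    by_cases hzero : ∀ i, c i = 0
    · have hbot : ⨆ i, W i a₀ = ⊥ := iSup_eq_bot.2 fun i =>
        (W i a₀).eq_bot_of_starProjection_eq_smul_id (hc i a₀) (hzero i)
      exact absurd (htop a₀ ▸ hbot) top_ne_bot
    · obtain ⟨i, hi⟩ := not_forall.1 hzero
      exact ⟨i, fun a => (W i a).eq_top_of_starProjection_eq_smul_id (hc i a) hi⟩
  · intro hdec g hg hsym
    obtain ⟨n, μ, hμ⟩ :=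
      (Set.finite_iUnion fun a => finite_hasEigenvalue (g a)).fin_embedding
    obtain ⟨i, hi⟩ := hdec n (fun i a => eigenspace (g a) (μ i))
      (fun i => hg.isSubrep_eigenspace (μ i))
      (fun a => (hsym a).iSup_eigenspace_eq_top_of_subset_range
        (hμ ▸ Set.subset_iUnion (fun a => {c | HasEigenvalue (g a) c}) a))
      (fun i j hij => orthSubreps_eigenspace hsym (μ.injective.ne hij))
    exact ⟨μ i, fun a => eq_smul_id_of_eigenspace_eq_top (hi a)⟩

/-- for a nonzero representation `(V, ρ)` of a nonempty finite quiver with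
Hermitian metric `h` (given by the inner products), `h` is irreducible iff every finite
orthogonal direct-sum decomposition of `(V, ρ)` into subrepresentations is trivial. -/
theorem irreducibleMetric_iff_no_orthogonal_decomposition
    {Q₀ Q₁ : Type*} [Fintype Q₀] [Fintype Q₁] [Nonempty Q₀] [DecidableEq Q₀]
    (s t : Q₁ → Q₀)
    (V : Q₀ → Type*) [∀ a, NormedAddCommGroup (V a)] [∀ a, InnerProductSpace ℂ (V a)]
    [∀ a, FiniteDimensional ℂ (V a)]
    (ρ : ∀ α, V (s α) →ₗ[ℂ] V (t α))
    (hnz : 0 < ∑ a, Module.finrank ℂ (V a)) :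
    IsIrreducibleMetric s t V ρ ↔
      ∀ (n : ℕ) (W : Fin n → ∀ a, Submodule ℂ (V a)),
        (∀ i, IsSubrep s t V ρ (W i)) →
        (∀ a, (⨆ i, W i a) = ⊤) →
        (∀ i j, i ≠ j → OrthSubreps V (W i) (W j)) →
        ∃ i, ∀ a, W i a = ⊤ :=
  irreducibleMetric_iff_no_orthogonal_decomposition_general s t V ρ hnz
end

section
/- Let θ ∈ ℚ^{Q₀} be a rational weight, (V,ρ) a nonzero complex representation of Q, and h an Einstein–Hermitian metric on (V,ρ) with respect to θ. Then there exists a finite family (V_i,ρ_i)_{i∈I} of θ-stable subrepresentations of (V,ρ) such that (V,ρ) = ⊕_{i∈I}(V_i,ρ_i) and such that for all i, j ∈ I with i ≠ j, the subrepresentations (V_i,ρ_i) and (V_j,ρ_j) are orthogonal with respect to h. -/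
/-!
Let `c` be the Einstein–Hermitian constant and `U` a subrepresentation, with orthogonal
projections `P_a` onto `U_a`. Since `ρ_α` maps `U_{s α}` into `U_{t α}`, taking
`∑_a tr (P_a K_θ)` gives `Re c · rk U = deg_θ U + ∑_α ‖P_{U_{t α}} ρ_α P_{U_{s α}ᗮ}‖²`
(Hilbert–Schmidt norms). So every nonzero subrepresentation has slope at most `Re c`, with
equality exactly when `Uᗮ` is a subrepresentation as well. If such an orthogonally complemented
`W` is not stable, a destabilising `U ⊆ W` has slope `≥ μ(W) = Re c`, hence `= Re c`; then
`W = U ⊕ (Uᗮ ⊓ W)` orthogonally with both summands again orthogonally complemented, and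
induction on the rank splits `W` into stable pieces.
-/

open Module

variable {Q₀ Q₁ : Type*} [Fintype Q₀] [Fintype Q₁] [DecidableEq Q₀]
  (s t : Q₁ → Q₀)
  (V : Q₀ → Type*) [∀ a, NormedAddCommGroup (V a)] [∀ a, InnerProductSpace ℂ (V a)]
  [∀ a, FiniteDimensional ℂ (V a)]

open LinearMap

section InnerProductSpace

variable {𝕜 E F : Type*} [RCLike 𝕜] [NormedAddCommGroup E] [InnerProductSpace 𝕜 E]
  [FiniteDimensional 𝕜 E] [NormedAddCommGroup F] [InnerProductSpace 𝕜 F] [FiniteDimensional 𝕜 F]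

theorem re_trace_adjoint_comp_self {ι : Type*} [Fintype ι] (b : OrthonormalBasis ι 𝕜 E)
    (X : E →ₗ[𝕜] F) :
    RCLike.re (trace 𝕜 E (adjoint X ∘ₗ X)) = ∑ i, ‖X (b i)‖ ^ 2 := by
  simp [trace_eq_sum_inner _ b, adjoint_inner_right]

theorem re_trace_adjoint_comp_self_nonneg (X : E →ₗ[𝕜] F) :
    0 ≤ RCLike.re (trace 𝕜 E (adjoint X ∘ₗ X)) := by
  rw [re_trace_adjoint_comp_self (stdOrthonormalBasis 𝕜 E)]
  positivity

theorem re_trace_adjoint_comp_self_eq_zero_iff (X : E →ₗ[𝕜] F) :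
    RCLike.re (trace 𝕜 E (adjoint X ∘ₗ X)) = 0 ↔ X = 0 := by
  set b := stdOrthonormalBasis 𝕜 E
  rw [re_trace_adjoint_comp_self b, Finset.sum_eq_zero_iff_of_nonneg (fun _ _ ↦ by positivity)]
  simp only [Finset.mem_univ, forall_const, ne_eq, OfNat.ofNat_ne_zero, not_false_eq_true,
    pow_eq_zero_iff, norm_eq_zero]
  exact ⟨fun h ↦ b.toBasis.ext (by simpa using h), fun h i ↦ by simp [h]⟩

theorem trace_starProjection (U : Submodule 𝕜 E) :
    trace 𝕜 E U.starProjection = finrank 𝕜 U :=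
  IsProj.trace ⟨U.starProjection_apply_mem, fun _ hx ↦ U.starProjection_eq_self_iff.2 hx⟩

theorem trace_starProjection_comp_comp_adjoint_sub (B : E →ₗ[𝕜] F) {U : Submodule 𝕜 E}
    {U' : Submodule 𝕜 F} (hB : ∀ x ∈ U, B x ∈ U') :
    trace 𝕜 F (U'.starProjection ∘ₗ B ∘ₗ adjoint B) -
        trace 𝕜 E (U.starProjection ∘ₗ adjoint B ∘ₗ B) =
      trace 𝕜 E (adjoint ((U'.starProjection : F →ₗ[𝕜] F) ∘ₗ B ∘ₗ Uᗮ.starProjection) ∘ₗ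
        ((U'.starProjection : F →ₗ[𝕜] F) ∘ₗ B ∘ₗ Uᗮ.starProjection)) := by
  have hP' := Uᗮ.isSymmetricProjection_starProjection
  have hQ := U'.isSymmetricProjection_starProjection
  have hP'P : (Uᗮ.starProjection : E →ₗ[𝕜] E) = LinearMap.id - (U.starProjection : E →ₗ[𝕜] E) := by
    rw [U.starProjection_orthogonal, ContinuousLinearMap.toLinearMap_sub]; rfl
  set P := (U.starProjection : E →ₗ[𝕜] E)
  set P' := (Uᗮ.starProjection : E →ₗ[𝕜] E)
  set Q := (U'.starProjection : F →ₗ[𝕜] F)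
  have hP'P' : P' ∘ₗ P' = P' := hP'.isIdempotentElem.eq
  have hQQ (X : E →ₗ[𝕜] F) : Q ∘ₗ Q ∘ₗ X = Q ∘ₗ X := by
    rw [← comp_assoc]; exact congrArg (· ∘ₗ X) hQ.isIdempotentElem.eq
  have hQBP : Q ∘ₗ B ∘ₗ P = B ∘ₗ P := by
    ext x
    exact U'.starProjection_eq_self_iff.2 (hB _ (U.starProjection_apply_mem x))
  rw [adjoint_comp, adjoint_comp, hP'.isSymmetric.adjoint_eq, hQ.isSymmetric.adjoint_eq]
  calc trace 𝕜 F (Q ∘ₗ B ∘ₗ adjoint B) - trace 𝕜 E (P ∘ₗ adjoint B ∘ₗ B)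
      = trace 𝕜 F (Q ∘ₗ B ∘ₗ adjoint B) - trace 𝕜 F ((Q ∘ₗ B ∘ₗ P) ∘ₗ adjoint B) := by
        rw [hQBP, ← trace_comp_comm' (B ∘ₗ P), ← trace_comp_comm' P]; rfl
    _ = trace 𝕜 F ((Q ∘ₗ B) ∘ₗ (P' ∘ₗ adjoint B)) := by
        rw [hP'P, ← map_sub]
        simp only [comp_sub, sub_comp, id_comp, comp_assoc]
    _ = trace 𝕜 E ((P' ∘ₗ adjoint B ∘ₗ Q ∘ₗ B) ∘ₗ P') := by
        rw [← trace_comp_comm', trace_comp_comm' P', ← comp_assoc _ P' P', hP'P']; rfl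
    _ = trace 𝕜 E ((P' ∘ₗ adjoint B ∘ₗ Q) ∘ₗ Q ∘ₗ B ∘ₗ P') := by
        simp only [comp_assoc, hQQ]

theorem re_trace_starProjection_comp_comp_adjoint_sub_nonneg (B : E →ₗ[𝕜] F)
    {U : Submodule 𝕜 E} {U' : Submodule 𝕜 F} (hB : ∀ x ∈ U, B x ∈ U') :
    0 ≤ RCLike.re (trace 𝕜 F (U'.starProjection ∘ₗ B ∘ₗ adjoint B) -
        trace 𝕜 E (U.starProjection ∘ₗ adjoint B ∘ₗ B)) := by
  rw [trace_starProjection_comp_comp_adjoint_sub B hB]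
  exact re_trace_adjoint_comp_self_nonneg _

theorem re_trace_starProjection_comp_comp_adjoint_sub_eq_zero_iff (B : E →ₗ[𝕜] F)
    {U : Submodule 𝕜 E} {U' : Submodule 𝕜 F} (hB : ∀ x ∈ U, B x ∈ U') :
    RCLike.re (trace 𝕜 F (U'.starProjection ∘ₗ B ∘ₗ adjoint B) -
        trace 𝕜 E (U.starProjection ∘ₗ adjoint B ∘ₗ B)) = 0 ↔ ∀ x ∈ Uᗮ, B x ∈ U'ᗮ := by
  rw [trace_starProjection_comp_comp_adjoint_sub B hB, re_trace_adjoint_comp_self_eq_zero_iff]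
  simp only [LinearMap.ext_iff, comp_apply, ContinuousLinearMap.coe_coe, LinearMap.zero_apply,
    Submodule.starProjection_apply_eq_zero_iff]
  exact ⟨fun h x hx ↦ Uᗮ.starProjection_eq_self_iff.2 hx ▸ h x,
    fun h x ↦ h _ (Uᗮ.starProjection_apply_mem x)⟩

end InnerProductSpace

theorem sum_finrank_pos_iff {ι K : Type*} [Fintype ι] [DivisionRing K] {M : ι → Type*}
    [∀ i, AddCommGroup (M i)] [∀ i, Module K (M i)] [∀ i, FiniteDimensional K (M i)]
    (W : ∀ i, Submodule K (M i)) : 0 < ∑ i, finrank K (W i) ↔ ∃ i, W i ≠ ⊥ := by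
  simp [pos_iff_ne_zero, Submodule.finrank_eq_zero]

theorem sum_finrank_lt_of_le_of_ne {ι K : Type*} [Fintype ι] [DivisionRing K] {M : ι → Type*}
    [∀ i, AddCommGroup (M i)] [∀ i, Module K (M i)] [∀ i, FiniteDimensional K (M i)]
    {U W : ∀ i, Submodule K (M i)} (hle : ∀ i, U i ≤ W i) (hne : U ≠ W) :
    ∑ i, finrank K (U i) < ∑ i, finrank K (W i) := by
  obtain ⟨i, hi⟩ := Function.ne_iff.1 hne
  exact Finset.sum_lt_sum (fun i _ ↦ Submodule.finrank_mono (hle i))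
    ⟨i, Finset.mem_univ i, Submodule.finrank_lt_finrank_of_lt (lt_of_le_of_ne (hle i) hi)⟩

variable {s t V}

section Subrep

omit [Fintype Q₀] [Fintype Q₁] [DecidableEq Q₀] [∀ a, FiniteDimensional ℂ (V a)]

theorem IsSubrep.inf {ρ : ∀ α, V (s α) →ₗ[ℂ] V (t α)} {W W' : ∀ a, Submodule ℂ (V a)}
    (hW : IsSubrep s t V ρ W) (hW' : IsSubrep s t V ρ W') :
    IsSubrep s t V ρ fun a ↦ W a ⊓ W' a :=
  fun α _ hx ↦ ⟨hW α _ hx.1, hW' α _ hx.2⟩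

theorem IsSubrep.sup {ρ : ∀ α, V (s α) →ₗ[ℂ] V (t α)} {W W' : ∀ a, Submodule ℂ (V a)}
    (hW : IsSubrep s t V ρ W) (hW' : IsSubrep s t V ρ W') :
    IsSubrep s t V ρ fun a ↦ W a ⊔ W' a := by
  intro α x hx
  obtain ⟨y, hy, z, hz, rfl⟩ := Submodule.mem_sup.1 hx
  rw [map_add]
  exact Submodule.add_mem_sup (hW α y hy) (hW' α z hz)

theorem OrthSubreps.symm {W W' : ∀ a, Submodule ℂ (V a)} (h : OrthSubreps V W W') :
    OrthSubreps V W' W :=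
  fun a v hv w hw ↦ inner_eq_zero_symm.1 (h a w hw v hv)

theorem OrthSubreps.mono {W₁ W₂ U₁ U₂ : ∀ a, Submodule ℂ (V a)} (h : OrthSubreps V W₁ W₂)
    (h₁ : ∀ a, U₁ a ≤ W₁ a) (h₂ : ∀ a, U₂ a ≤ W₂ a) : OrthSubreps V U₁ U₂ :=
  fun a v hv w hw ↦ h a v (h₁ a hv) w (h₂ a hw)

end Subrep

theorem sum_sum_tTerm {M : Type*} [AddCommMonoid M] (ρ : ∀ α, V (s α) →ₗ[ℂ] V (t α))
    (φ : ∀ a, Module.End ℂ (V a) → M) :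
    ∑ a, ∑ α : {α // t α = a}, φ a (tTerm s t V ρ a α) =
      ∑ α, φ (t α) (ρ α ∘ₗ adjoint (ρ α)) := by
  rw [← Fintype.sum_fiberwise t]
  refine Finset.sum_congr rfl fun a _ ↦ Finset.sum_congr rfl ?_
  rintro ⟨α, rfl⟩ -
  rfl

theorem sum_sum_sTerm {M : Type*} [AddCommMonoid M] (ρ : ∀ α, V (s α) →ₗ[ℂ] V (t α))
    (φ : ∀ a, Module.End ℂ (V a) → M) :
    ∑ a, ∑ α : {α // s α = a}, φ a (sTerm s t V ρ a α) =
      ∑ α, φ (s α) (adjoint (ρ α) ∘ₗ ρ α) := by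
  rw [← Fintype.sum_fiberwise s]
  refine Finset.sum_congr rfl fun a _ ↦ Finset.sum_congr rfl ?_
  rintro ⟨α, rfl⟩ -
  rfl

theorem sum_trace_starProjection_comp_Kop (ρ : ∀ α, V (s α) →ₗ[ℂ] V (t α)) (θ : Q₀ → ℝ)
    (U : ∀ a, Submodule ℂ (V a)) :
    ∑ a, trace ℂ (V a) ((U a).starProjection ∘ₗ Kop s t V ρ θ a) =
      ∑ a, (θ a : ℂ) * finrank ℂ (U a) +
        ∑ α, (trace ℂ (V (t α)) ((U (t α)).starProjection ∘ₗ ρ α ∘ₗ adjoint (ρ α)) -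
          trace ℂ (V (s α)) ((U (s α)).starProjection ∘ₗ adjoint (ρ α) ∘ₗ ρ α)) := by
  have hK (a : Q₀) : ((U a).starProjection : Module.End ℂ (V a)) ∘ₗ Kop s t V ρ θ a =
      (θ a : ℂ) • ((U a).starProjection : Module.End ℂ (V a)) +
        ∑ α : {α // t α = a}, ((U a).starProjection : Module.End ℂ (V a)) ∘ₗ tTerm s t V ρ a α -
        ∑ α : {α // s α = a}, ((U a).starProjection : Module.End ℂ (V a)) ∘ₗ sTerm s t V ρ a α := by
    simp only [Kop, ← Module.End.mul_eq_comp, mul_add, mul_sub, Finset.mul_sum, mul_smul_comm]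
    rfl
  simp only [hK, map_add, map_sub, map_sum, map_smul, trace_starProjection, smul_eq_mul,
    Finset.sum_add_distrib, Finset.sum_sub_distrib,
    sum_sum_tTerm ρ fun a T ↦ trace ℂ (V a) ((U a).starProjection ∘ₗ T),
    sum_sum_sTerm ρ fun a T ↦ trace ℂ (V a) ((U a).starProjection ∘ₗ T)]
  abel

structure IsOrthStableDecomposition (ρ : ∀ α, V (s α) →ₗ[ℂ] V (t α)) (θ : Q₀ → ℝ)
    (W : ∀ a, Submodule ℂ (V a)) (S : Finset (∀ a, Submodule ℂ (V a))) : Prop where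
  isSubrep : ∀ U ∈ S, IsSubrep s t V ρ U
  isStableSubrep : ∀ U ∈ S, IsStableSubrep s t V ρ θ U
  iSup_eq : ∀ a, ⨆ U ∈ S, U a = W a
  pairwise_orthSubreps : (S : Set (∀ a, Submodule ℂ (V a))).Pairwise (OrthSubreps V)

namespace IsOrthStableDecomposition

variable {ρ : ∀ α, V (s α) →ₗ[ℂ] V (t α)} {θ : Q₀ → ℝ} {W W' : ∀ a, Submodule ℂ (V a)}
  {S S' : Finset (∀ a, Submodule ℂ (V a))}

omit [Fintype Q₁] [DecidableEq Q₀] [∀ a, FiniteDimensional ℂ (V a)]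

theorem le (h : IsOrthStableDecomposition ρ θ W S) {U : ∀ a, Submodule ℂ (V a)} (hU : U ∈ S)
    (a : Q₀) : U a ≤ W a :=
  h.iSup_eq a ▸ le_iSup₂_of_le U hU le_rfl

theorem singleton (hW : IsSubrep s t V ρ W) (hWs : IsStableSubrep s t V ρ θ W) :
    IsOrthStableDecomposition ρ θ W {W} where
  isSubrep := by simpa using hW
  isStableSubrep := by simpa using hWs
  iSup_eq := by simp
  pairwise_orthSubreps := by simp

open Classical in
theorem union (h : IsOrthStableDecomposition ρ θ W S) (h' : IsOrthStableDecomposition ρ θ W' S')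
    (hWW' : OrthSubreps V W W') :
    IsOrthStableDecomposition ρ θ (fun a ↦ W a ⊔ W' a) (S ∪ S') where
  isSubrep U hU := (Finset.mem_union.1 hU).elim (h.isSubrep U) (h'.isSubrep U)
  isStableSubrep U hU := (Finset.mem_union.1 hU).elim (h.isStableSubrep U) (h'.isStableSubrep U)
  iSup_eq a := by rw [Finset.iSup_union, h.iSup_eq, h'.iSup_eq]
  pairwise_orthSubreps := by
    rw [Finset.coe_union, Set.pairwise_union]
    refine ⟨h.pairwise_orthSubreps, h'.pairwise_orthSubreps, fun U hU U' hU' _ ↦ ?_⟩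
    have hUU' := hWW'.mono (h.le hU) (h'.le hU')
    exact ⟨hUU', hUU'.symm⟩

theorem exists_fin (h : IsOrthStableDecomposition ρ θ W S) :
    ∃ (n : ℕ) (U : Fin n → ∀ a, Submodule ℂ (V a)),
      (∀ i, IsSubrep s t V ρ (U i)) ∧ (∀ i, IsStableSubrep s t V ρ θ (U i)) ∧
      (∀ a, ⨆ i, U i a = W a) ∧ ∀ i j, i ≠ j → OrthSubreps V (U i) (U j) := by
  set e := S.equivFin.symm
  refine ⟨S.card, fun i ↦ e i, fun i ↦ h.isSubrep _ (e i).2, fun i ↦ h.isStableSubrep _ (e i).2,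
    fun a ↦ ?_, fun i j hij ↦ ?_⟩
  · rw [← h.iSup_eq a, e.iSup_comp (g := fun U : S ↦ (U : ∀ a, Submodule ℂ (V a)) a),
      iSup_subtype']
  · exact h.pairwise_orthSubreps (e i).2 (e j).2 fun hij' ↦ hij (e.injective (Subtype.ext hij'))

end IsOrthStableDecomposition

section EinsteinHermitian

variable {ρ : ∀ α, V (s α) →ₗ[ℂ] V (t α)} {θ : Q₀ → ℝ} {c : ℂ}

theorem re_mul_sum_finrank_eq (hc : ∀ a, Kop s t V ρ θ a = c • LinearMap.id)
    (U : ∀ a, Submodule ℂ (V a)) :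
    c.re * ∑ a, (finrank ℂ (U a) : ℝ) = ∑ a, θ a * finrank ℂ (U a) +
      ∑ α, RCLike.re (trace ℂ (V (t α)) ((U (t α)).starProjection ∘ₗ ρ α ∘ₗ adjoint (ρ α)) -
        trace ℂ (V (s α)) ((U (s α)).starProjection ∘ₗ adjoint (ρ α) ∘ₗ ρ α)) := by
  have h := congrArg Complex.re (sum_trace_starProjection_comp_Kop ρ θ U)
  simp only [hc, comp_smul, comp_id, map_smul, trace_starProjection, smul_eq_mul,
    ← Finset.mul_sum] at h
  simpa [Complex.re_sum] using h

theorem subSlope_le_re (hc : ∀ a, Kop s t V ρ θ a = c • LinearMap.id)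
    {U : ∀ a, Submodule ℂ (V a)} (hU : IsSubrep s t V ρ U) (hU₀ : ∃ a, U a ≠ ⊥) :
    subSlope V θ U ≤ c.re := by
  have hrank : (0 : ℝ) < ∑ a, (finrank ℂ (U a) : ℝ) := by
    exact_mod_cast (sum_finrank_pos_iff U).2 hU₀
  have hdefect := Finset.sum_nonneg fun α (_ : α ∈ Finset.univ) ↦
    re_trace_starProjection_comp_comp_adjoint_sub_nonneg (ρ α) (hU α)
  rw [subSlope, div_le_iff₀ hrank]
  linarith [re_mul_sum_finrank_eq hc U]

theorem subSlope_eq_re_iff (hc : ∀ a, Kop s t V ρ θ a = c • LinearMap.id)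
    {U : ∀ a, Submodule ℂ (V a)} (hU : IsSubrep s t V ρ U) (hU₀ : ∃ a, U a ≠ ⊥) :
    subSlope V θ U = c.re ↔ IsSubrep s t V ρ fun a ↦ (U a)ᗮ := by
  have hrank : (0 : ℝ) < ∑ a, (finrank ℂ (U a) : ℝ) := by
    exact_mod_cast (sum_finrank_pos_iff U).2 hU₀
  rw [subSlope, div_eq_iff hrank.ne', re_mul_sum_finrank_eq hc U, left_eq_add,
    Finset.sum_eq_zero_iff_of_nonneg fun α _ ↦
      re_trace_starProjection_comp_comp_adjoint_sub_nonneg (ρ α) (hU α)]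
  simp only [Finset.mem_univ, true_implies,
    fun α ↦ re_trace_starProjection_comp_comp_adjoint_sub_eq_zero_iff (ρ α) (hU α)]
  rfl

theorem exists_lt_isSubrep_orthogonal_of_not_isStableSubrep
    (hc : ∀ a, Kop s t V ρ θ a = c • LinearMap.id) {W : ∀ a, Submodule ℂ (V a)}
    (hW : IsSubrep s t V ρ W) (hWperp : IsSubrep s t V ρ fun a ↦ (W a)ᗮ) (hW₀ : ∃ a, W a ≠ ⊥)
    (hWs : ¬ IsStableSubrep s t V ρ θ W) :
    ∃ U : ∀ a, Submodule ℂ (V a), IsSubrep s t V ρ U ∧ (IsSubrep s t V ρ fun a ↦ (U a)ᗮ) ∧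
      (∀ a, U a ≤ W a) ∧ (∃ a, U a ≠ ⊥) ∧ U ≠ W := by
  simp only [IsStableSubrep, hW₀, true_and, not_forall, not_lt] at hWs
  obtain ⟨U, hU, hUW, hU₀, hUne, hslope⟩ := hWs
  have hUc : subSlope V θ U = c.re := le_antisymm (subSlope_le_re hc hU hU₀)
    ((subSlope_eq_re_iff hc hW hW₀).2 hWperp ▸ hslope)
  exact ⟨U, hU, (subSlope_eq_re_iff hc hU hU₀).1 hUc, hUW, hU₀, hUne⟩

theorem exists_isOrthStableDecomposition (hc : ∀ a, Kop s t V ρ θ a = c • LinearMap.id)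
    {W : ∀ a, Submodule ℂ (V a)} (hW : IsSubrep s t V ρ W)
    (hWperp : IsSubrep s t V ρ fun a ↦ (W a)ᗮ) (hW₀ : ∃ a, W a ≠ ⊥) :
    ∃ S, IsOrthStableDecomposition ρ θ W S := by
  induction hn : ∑ a, finrank ℂ (W a) using Nat.strong_induction_on generalizing W with
  | _ n ih =>
  by_cases hWs : IsStableSubrep s t V ρ θ W
  · exact ⟨{W}, .singleton hW hWs⟩
  obtain ⟨U, hU, hUperp, hUW, hU₀, hUne⟩ :=
    exists_lt_isSubrep_orthogonal_of_not_isStableSubrep hc hW hWperp hW₀ hWs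
  set W' : ∀ a, Submodule ℂ (V a) := fun a ↦ (U a)ᗮ ⊓ W a
  have hW'perp : IsSubrep s t V ρ fun a ↦ (W' a)ᗮ := by
    have : (fun a ↦ (W' a)ᗮ) = fun a ↦ U a ⊔ (W a)ᗮ := funext fun a ↦ by
      rw [← Submodule.orthogonal_orthogonal (U a ⊔ (W a)ᗮ), ← Submodule.inf_orthogonal,
        Submodule.orthogonal_orthogonal]
    exact this ▸ hU.sup hWperp
  have hrank : ∑ a, finrank ℂ (U a) + ∑ a, finrank ℂ (W' a) = n := by
    rw [← hn, ← Finset.sum_add_distrib]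
    exact Finset.sum_congr rfl fun a _ ↦ Submodule.finrank_add_inf_finrank_orthogonal (hUW a)
  have hUlt : ∑ a, finrank ℂ (U a) < n := hn ▸ sum_finrank_lt_of_le_of_ne hUW hUne
  have hUpos := (sum_finrank_pos_iff U).2 hU₀
  obtain ⟨S, hS⟩ := ih _ hUlt hU hUperp hU₀ rfl
  obtain ⟨S', hS'⟩ := ih (∑ a, finrank ℂ (W' a)) (by omega) (hUperp.inf hW) hW'perp
    ((sum_finrank_pos_iff W').1 (by omega)) rfl
  have hsup : (fun a ↦ U a ⊔ W' a) = W :=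
    funext fun a ↦ Submodule.sup_orthogonal_inf_of_hasOrthogonalProjection (hUW a)
  exact ⟨S ∪ S', hsup ▸ hS.union hS' fun a v hv w hw ↦
    Submodule.inner_right_of_mem_orthogonal hv hw.1⟩

end EinsteinHermitian

theorem einsteinHermitian_orthogonal_decomposition_general
    {Q₀ Q₁ : Type*} [Fintype Q₀] [Fintype Q₁] [DecidableEq Q₀]
    (s t : Q₁ → Q₀)
    (V : Q₀ → Type*) [∀ a, NormedAddCommGroup (V a)] [∀ a, InnerProductSpace ℂ (V a)]
    [∀ a, FiniteDimensional ℂ (V a)]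
    (ρ : ∀ α, V (s α) →ₗ[ℂ] V (t α))
    (θ : Q₀ → ℚ)
    (hnz : 0 < ∑ a, Module.finrank ℂ (V a))
    (hEH : IsEinsteinHermitian s t V ρ (fun a => (θ a : ℝ))) :
    ∃ (n : ℕ) (W : Fin n → ∀ a, Submodule ℂ (V a)),
      (∀ i, IsSubrep s t V ρ (W i)) ∧
      (∀ i, IsStableSubrep s t V ρ (fun a => (θ a : ℝ)) (W i)) ∧
      (∀ a, (⨆ i, W i a) = ⊤) ∧
      (∀ i j, i ≠ j → OrthSubreps V (W i) (W j)) := by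
  obtain ⟨c, hc⟩ := hEH
  have htop₀ : ∃ a, (⊤ : Submodule ℂ (V a)) ≠ ⊥ :=
    (sum_finrank_pos_iff fun a ↦ (⊤ : Submodule ℂ (V a))).1 (by simpa using hnz)
  have htop_perp : IsSubrep s t V ρ fun a ↦ (⊤ : Submodule ℂ (V a))ᗮ := by
    simp [IsSubrep, Submodule.top_orthogonal_eq_bot]
  obtain ⟨S, hS⟩ := exists_isOrthStableDecomposition hc (fun _ _ _ ↦ Submodule.mem_top)
    htop_perp htop₀
  exact hS.exists_fin

/-- for a rational weight `θ`, a nonzero representation `(V, ρ)` and an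
Einstein–Hermitian metric on it with respect to `θ` (the metric being given by the inner
products on the `V a`), there is a finite family of `θ`-stable subrepresentations which
decompose `(V, ρ)` as a pairwise orthogonal direct sum. -/
theorem einsteinHermitian_orthogonal_decomposition
    {Q₀ Q₁ : Type*} [Fintype Q₀] [Fintype Q₁] [Nonempty Q₀] [DecidableEq Q₀]
    (s t : Q₁ → Q₀)
    (V : Q₀ → Type*) [∀ a, NormedAddCommGroup (V a)] [∀ a, InnerProductSpace ℂ (V a)]
    [∀ a, FiniteDimensional ℂ (V a)]
    (ρ : ∀ α, V (s α) →ₗ[ℂ] V (t α))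
    (θ : Q₀ → ℚ)
    (hnz : 0 < ∑ a, Module.finrank ℂ (V a))
    (hEH : IsEinsteinHermitian s t V ρ (fun a => (θ a : ℝ))) :
    ∃ (n : ℕ) (W : Fin n → ∀ a, Submodule ℂ (V a)),
      (∀ i, IsSubrep s t V ρ (W i)) ∧
      (∀ i, IsStableSubrep s t V ρ (fun a => (θ a : ℝ)) (W i)) ∧
      (∀ a, (⨆ i, W i a) = ⊤) ∧
      (∀ i j, i ≠ j → OrthSubreps V (W i) (W j)) :=
  einsteinHermitian_orthogonal_decomposition_general s t V ρ θ hnz hEH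
end
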